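/- For any two symmetric real n×n matrices B₁, B₂, one has 2‖[B₁,B₂]‖² ≤ 4‖B₁‖²‖B₂‖² ≤ (‖B₁‖² + ‖B₂‖²)². -/

import Mathlib

/-! Diagonalize `B₁ = U D Uᵀ` by an orthogonal `U`. Conjugation by `U` preserves the Frobenius norm
and commutes with the bracket, so with `C = Uᵀ B₂ U` one has `‖[B₁,B₂]‖² = ‖[D,C]‖²`, whose `(i,j)`
entry is `(dᵢ - dⱼ) Cᵢⱼ`. Since `(dᵢ - dⱼ)² ≤ 2(dᵢ² + dⱼ²) ≤ 2‖D‖²` for `i ≠ j`, this is at most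
`2‖D‖²‖C‖² = 2‖B₁‖²‖B₂‖²`. The second inequality is AM-GM. -/

open Matrix

noncomputable def frobSq {n : ℕ} (A : Matrix (Fin n) (Fin n) ℝ) : ℝ :=
  (Aᵀ * A).trace

def mcomm {n : ℕ} (A B : Matrix (Fin n) (Fin n) ℝ) : Matrix (Fin n) (Fin n) ℝ :=
  A * B - B * A

lemma sq_sub_le_two_mul_sum_sq {ι : Type*} [Fintype ι] (d : ι → ℝ) (i j : ι) :
    (d i - d j) ^ 2 ≤ 2 * ∑ k, d k ^ 2 := by
  classical
  rcases eq_or_ne i j with rfl | hij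
  · simp only [sub_self, ne_eq, OfNat.ofNat_ne_zero, not_false_eq_true, zero_pow]
    positivity
  · have hpair : d i ^ 2 + d j ^ 2 ≤ ∑ k, d k ^ 2 := by
      rw [← Finset.sum_pair hij (f := fun k => d k ^ 2)]
      exact Finset.sum_le_univ_sum_of_nonneg fun k => sq_nonneg (d k)
    nlinarith [sq_nonneg (d i + d j)]

lemma Matrix.IsSymm.exists_orthogonal_diagonal {n : ℕ} {A : Matrix (Fin n) (Fin n) ℝ}
    (hA : A.IsSymm) :
    ∃ U ∈ orthogonalGroup (Fin n) ℝ, ∃ d : Fin n → ℝ, A = U * diagonal d * Uᵀ := by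
  have hH : A.IsHermitian := isHermitian_iff_isSymm.mpr hA
  refine ⟨hH.eigenvectorUnitary, hH.eigenvectorUnitary.2, hH.eigenvalues, ?_⟩
  simpa [Unitary.conjStarAlgAut_apply, star_eq_conjTranspose] using hH.spectral_theorem

section Frobenius

variable {n : ℕ}

lemma frobSq_eq_sum (A : Matrix (Fin n) (Fin n) ℝ) :
    frobSq A = ∑ j, ∑ i, A i j ^ 2 := by
  simp [frobSq, trace, diag, mul_apply, sq]

lemma frobSq_diagonal (d : Fin n → ℝ) : frobSq (diagonal d) = ∑ k, d k ^ 2 := by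
  simp [frobSq_eq_sum, diagonal_apply, sq]

lemma frobSq_conj {U : Matrix (Fin n) (Fin n) ℝ} (hU : U ∈ orthogonalGroup (Fin n) ℝ)
    (M : Matrix (Fin n) (Fin n) ℝ) : frobSq (U * M * Uᵀ) = frobSq M := by
  have hUU : Uᵀ * U = 1 := (mem_orthogonalGroup_iff' _ _).mp hU
  calc frobSq (U * M * Uᵀ) = (U * (Mᵀ * M) * Uᵀ).trace := by
        simp only [frobSq, transpose_mul, transpose_transpose, Matrix.mul_assoc]
        rw [← Matrix.mul_assoc Uᵀ U, hUU, Matrix.one_mul]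
    _ = (Uᵀ * U * (Mᵀ * M)).trace := by rw [trace_mul_comm, ← Matrix.mul_assoc]
    _ = frobSq M := by rw [hUU, Matrix.one_mul, frobSq]

lemma mcomm_conj {U : Matrix (Fin n) (Fin n) ℝ} (hU : U ∈ orthogonalGroup (Fin n) ℝ)
    (A C : Matrix (Fin n) (Fin n) ℝ) :
    mcomm (U * A * Uᵀ) (U * C * Uᵀ) = U * mcomm A C * Uᵀ := by
  have hUU : Uᵀ * U = 1 := (mem_orthogonalGroup_iff' _ _).mp hU
  have cancel : ∀ X : Matrix (Fin n) (Fin n) ℝ, Uᵀ * (U * X) = X := fun X => by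
    rw [← Matrix.mul_assoc, hUU, Matrix.one_mul]
  simp only [mcomm, Matrix.mul_sub, Matrix.sub_mul, Matrix.mul_assoc, cancel]

lemma mcomm_diagonal_apply (d : Fin n → ℝ) (C : Matrix (Fin n) (Fin n) ℝ) (i j : Fin n) :
    mcomm (diagonal d) C i j = (d i - d j) * C i j := by
  simp only [mcomm, Matrix.sub_apply, diagonal_mul, mul_diagonal]
  ring

lemma frobSq_mcomm_diagonal_le (d : Fin n → ℝ) (C : Matrix (Fin n) (Fin n) ℝ) :
    frobSq (mcomm (diagonal d) C) ≤ 2 * frobSq (diagonal d) * frobSq C := by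
  rw [frobSq_diagonal]
  simp only [frobSq_eq_sum, mcomm_diagonal_apply]
  rw [Finset.mul_sum]
  gcongr with j _
  rw [Finset.mul_sum]
  gcongr with i _
  rw [mul_pow]
  exact mul_le_mul_of_nonneg_right (sq_sub_le_two_mul_sum_sq d i j) (sq_nonneg _)

lemma frobSq_mcomm_le_of_isSymm {A : Matrix (Fin n) (Fin n) ℝ} (hA : A.IsSymm)
    (B : Matrix (Fin n) (Fin n) ℝ) :
    frobSq (mcomm A B) ≤ 2 * frobSq A * frobSq B := by
  obtain ⟨U, hU, d, rfl⟩ := hA.exists_orthogonal_diagonal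
  have hB : B = U * (Uᵀ * B * U) * Uᵀ := by
    have hUU : U * Uᵀ = 1 := (mem_orthogonalGroup_iff _ _).mp hU
    simp only [Matrix.mul_assoc, hUU, Matrix.mul_one]
    rw [← Matrix.mul_assoc, hUU, Matrix.one_mul]
  rw [hB, mcomm_conj hU, frobSq_conj hU, frobSq_conj hU, frobSq_conj hU]
  exact frobSq_mcomm_diagonal_le d _

end Frobenius

theorem ddvv_m2_chain_general {n : ℕ} (B₁ B₂ : Matrix (Fin n) (Fin n) ℝ)
    (h₁ : B₁.IsSymm) :
    2 * frobSq (mcomm B₁ B₂) ≤ 4 * frobSq B₁ * frobSq B₂ ∧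
      4 * frobSq B₁ * frobSq B₂ ≤ (frobSq B₁ + frobSq B₂) ^ 2 :=
  ⟨by linarith [frobSq_mcomm_le_of_isSymm h₁ B₂], four_mul_le_sq_add _ _⟩

theorem ddvv_m2_chain {n : ℕ} (B₁ B₂ : Matrix (Fin n) (Fin n) ℝ)
    (h₁ : B₁.IsSymm) (h₂ : B₂.IsSymm) :
    2 * frobSq (mcomm B₁ B₂) ≤ 4 * frobSq B₁ * frobSq B₂ ∧
      4 * frobSq B₁ * frobSq B₂ ≤ (frobSq B₁ + frobSq B₂) ^ 2 :=
  ddvv_m2_chain_general B₁ B₂ h₁
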